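/- arXiv:1911.08732 — 2 statements merged into one kernel-verified Lean document; each statement's English description precedes it below -/
import Mathlib

section
/- Let h be a fully-commutative decreasing factorization with f_i^* defined, and let x be the largest unpaired letter of h^i in the pairing process. Then exactly one of the following holds: (a) x+1 ∈ h^{i+1} ∩ h^i, (b) x+1 ∉ h^{i+1} ∪ h^i, (c) x+1 ∈ h^{i+1} and x+1 ∉ h^i. In particular, if x+1 ∈ h^i then x+1 ∈ h^{i+1}. -/
/-- One elementary relation of the 0-Hecke monoid applied somewhere inside a word
(letters are positive integers; `p + 1 < q ∨ q + 1 < p` encodes `|p - q| > 1`). -/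
inductive HeckeStep : List ℕ → List ℕ → Prop
  | comm (u v : List ℕ) (p q : ℕ) (hpq : p + 1 < q ∨ q + 1 < p) :
      HeckeStep (u ++ p :: q :: v) (u ++ q :: p :: v)
  | braid (u v : List ℕ) (p q : ℕ) :
      HeckeStep (u ++ p :: q :: p :: v) (u ++ q :: p :: q :: v)
  | idem (u v : List ℕ) (p : ℕ) :
      HeckeStep (u ++ p :: p :: v) (u ++ p :: v)

/-- 0-Hecke equivalence of words. -/
def HeckeEquiv : List ℕ → List ℕ → Prop := Relation.EqvGen HeckeStep

/-- A word contains a consecutive braid subword `i (i+1) i` or `(i+1) i (i+1)`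
(the latter is the form `i (i-1) i`). -/
def ContainsBraid (w : List ℕ) : Prop :=
  ∃ (u v : List ℕ) (i : ℕ),
    w = u ++ i :: (i+1) :: i :: v ∨ w = u ++ (i+1) :: i :: (i+1) :: v

/-- A word is fully-commutative if no 0-Hecke equivalent word contains a
consecutive braid subword. -/
def FullyCommutative (w : List ℕ) : Prop :=
  ∀ w', HeckeEquiv w w' → ¬ ContainsBraid w'

/-- The strictly decreasing word whose letters are the given finite set. -/
def descWord (s : Finset ℕ) : List ℕ := (s.sort (· ≤ ·)).reverse

/-- The Hecke word `h^m ⋯ h^2 h^1` of a decreasing factorization into `m` factors,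
where (0-indexed) `h j` is the factor `h^{j+1}`; each factor is read as a strictly
decreasing word. -/
def factorWord (m : ℕ) (h : ℕ → Finset ℕ) : List ℕ :=
  ((List.range m).reverse.map (fun j => descWord (h j))).flatten

/-- Pairing process: the letters of the upper factor, given as a list (largest
first), successively pair with the smallest yet-unpaired letter `≥` them in the
lower factor `rest`; returns the set of unpaired letters of the lower factor. -/
def pairAux : List ℕ → Finset ℕ → Finset ℕ
  | [], rest => rest
  | x :: xs, rest =>
    if hc : (rest.filter (fun a => x ≤ a)).Nonempty then
      pairAux xs (rest.erase ((rest.filter (fun a => x ≤ a)).min' hc))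
    else pairAux xs rest

/-- Unpaired letters of the lower factor `a = h^i` after pairing with the upper
factor `b = h^{i+1}`. -/
def unpairedLow (a b : Finset ℕ) : Finset ℕ := pairAux (descWord b) a

/-- The crystal operator `f^⋆` on the pair of factors `(a, b) = (h^i, h^{i+1})`. -/
def fStarPair (a b : Finset ℕ) : Option (Finset ℕ × Finset ℕ) :=
  if hU : (unpairedLow a b).Nonempty then
    let x := (unpairedLow a b).max' hU
    if x + 1 ∈ a ∧ x + 1 ∈ b then some (a.erase (x+1), insert x b)
    else some (a.erase x, insert x b)
  else none

/-- The crystal operator `f_{i+1}^⋆` (0-indexed `i`), acting on the factors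
`h i` and `h (i+1)` of a decreasing factorization. -/
def fStar (i : ℕ) (h : ℕ → Finset ℕ) : Option (ℕ → Finset ℕ) :=
  match fStarPair (h i) (h (i+1)) with
  | none => none
  | some (a, b) => some (Function.update (Function.update h i a) (i+1) b)

/-!
A letter `y` of `h^{i+1}` pairs with the smallest unpaired letter `≥ y` of `h^i`. While `x` is
unpaired, a letter `y ≤ x` therefore never takes `x + 1`, and a letter `y > x + 1` cannot take it
at all. Hence if `x` ends unpaired, `x + 1 ∈ h^i` and `x + 1 ∉ h^{i+1}`, then `x + 1` ends
unpaired too, contradicting the maximality of `x`.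
-/

lemma mem_descWord {s : Finset ℕ} {y : ℕ} : y ∈ descWord s ↔ y ∈ s := by
  simp [descWord]

lemma pairAux_subset (xs : List ℕ) (rest : Finset ℕ) : pairAux xs rest ⊆ rest := by
  induction xs generalizing rest with
  | nil => simp [pairAux]
  | cons y xs ih =>
    rw [pairAux]
    split
    · exact (ih _).trans (Finset.erase_subset _ _)
    · exact ih _

lemma mem_pairAux_of_mem_pairAux_of_le {xs : List ℕ} {rest : Finset ℕ} {x z : ℕ}
    (hx : x ∈ pairAux xs rest) (hxz : x ≤ z) (hz : z ∈ rest)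
    (hxs : ∀ y ∈ xs, y ≤ x ∨ z < y) : z ∈ pairAux xs rest := by
  induction xs generalizing rest with
  | nil => simpa [pairAux] using hz
  | cons y xs ih =>
    have hxs' : ∀ y ∈ xs, y ≤ x ∨ z < y := fun y hy => hxs y (List.mem_cons_of_mem _ hy)
    rw [pairAux] at hx ⊢
    split_ifs at hx ⊢ with hc
    · set e := (rest.filter (y ≤ ·)).min' hc
      have hxe : x ∈ rest.erase e := pairAux_subset _ _ hx
      have hye : y ≤ e := (Finset.mem_filter.mp (Finset.min'_mem _ hc)).2
      have hez : e ≠ z := by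
        rcases hxs y List.mem_cons_self with hyx | hzy
        · have hex : e ≤ x := Finset.min'_le _ _ <|
            Finset.mem_filter.mpr ⟨Finset.mem_of_mem_erase hxe, hyx⟩
          have := Finset.ne_of_mem_erase hxe
          omega
        · omega
      exact ih hx (Finset.mem_erase.mpr ⟨hez.symm, hz⟩) hxs'
    · exact ih hx hz hxs'

lemma succ_mem_unpairedLow {a b : Finset ℕ} {x : ℕ} (hx : x ∈ unpairedLow a b)
    (ha : x + 1 ∈ a) (hb : x + 1 ∉ b) : x + 1 ∈ unpairedLow a b := by
  refine mem_pairAux_of_mem_pairAux_of_le hx (Nat.le_succ x) ha fun y hy => ?_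
  have : y ≠ x + 1 := fun hyx => hb (hyx ▸ mem_descWord.mp hy)
  omega

theorem largest_unpaired_succ_trichotomy_general (i : ℕ) (h : ℕ → Finset ℕ)
    (hU : (unpairedLow (h i) (h (i+1))).Nonempty) :
    ((unpairedLow (h i) (h (i+1))).max' hU + 1 ∈ h (i+1) ∧
        (unpairedLow (h i) (h (i+1))).max' hU + 1 ∈ h i) ∨
      ((unpairedLow (h i) (h (i+1))).max' hU + 1 ∉ h (i+1) ∧
        (unpairedLow (h i) (h (i+1))).max' hU + 1 ∉ h i) ∨
      ((unpairedLow (h i) (h (i+1))).max' hU + 1 ∈ h (i+1) ∧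
        (unpairedLow (h i) (h (i+1))).max' hU + 1 ∉ h i) := by
  set x := (unpairedLow (h i) (h (i+1))).max' hU
  by_cases hb : x + 1 ∈ h (i+1) <;> by_cases ha : x + 1 ∈ h i
  · exact Or.inl ⟨hb, ha⟩
  · exact Or.inr (Or.inr ⟨hb, ha⟩)
  · have := Finset.le_max' _ _ (succ_mem_unpairedLow (Finset.max'_mem _ hU) ha hb)
    omega
  · exact Or.inr (Or.inl ⟨hb, ha⟩)

/-- If `x` is the largest unpaired letter of `h^i` in the pairing process for
`f_i^⋆` on a fully-commutative decreasing factorization, then exactly one of the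
following holds: (a) `x+1 ∈ h^{i+1} ∩ h^i`, (b) `x+1 ∉ h^{i+1} ∪ h^i`,
(c) `x+1 ∈ h^{i+1}` and `x+1 ∉ h^i`.  In particular, if `x+1 ∈ h^i` then
`x+1 ∈ h^{i+1}` (0-indexed: factors `h i` and `h (i+1)`). -/
theorem largest_unpaired_succ_trichotomy (m i : ℕ) (h : ℕ → Finset ℕ)
    (hi : i + 1 < m)
    (hfc : FullyCommutative (factorWord m h))
    (hU : (unpairedLow (h i) (h (i+1))).Nonempty) :
    ((unpairedLow (h i) (h (i+1))).max' hU + 1 ∈ h (i+1) ∧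
        (unpairedLow (h i) (h (i+1))).max' hU + 1 ∈ h i) ∨
      ((unpairedLow (h i) (h (i+1))).max' hU + 1 ∉ h (i+1) ∧
        (unpairedLow (h i) (h (i+1))).max' hU + 1 ∉ h i) ∨
      ((unpairedLow (h i) (h (i+1))).max' hU + 1 ∈ h (i+1) ∧
        (unpairedLow (h i) (h (i+1))).max' hU + 1 ∉ h i) :=
  largest_unpaired_succ_trichotomy_general i h hU
end

section
/- Let P be a tableau with strictly increasing rows whose transpose is semistandard and whose row reading word is fully-commutative. If x, x' are letters with x < x' such that row(P)·x·x' is fully-commutative, then the insertion path of (P ← x) ← x' under *-insertion is strictly to the right of the insertion path of P ← x, and the new box added by x' is strictly to the right of and weakly below the new box added by x. -/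
/-- The smallest entry of `R` that is larger than `x` (junk value `0` if none). -/
def minGT (R : List ℕ) (x : ℕ) : ℕ := ((R.filter (fun y => x < y)).min?).getD 0

/-- The smallest `y ≤ x` such that the whole interval `[y, x]` is contained in `R`. -/
noncomputable def intervalMin (R : List ℕ) (x : ℕ) : ℕ :=
  sInf {y | y ≤ x ∧ ∀ z, y ≤ z → z ≤ x → z ∈ R}

/-- `⋆`-insertion of a letter `x` into a single row `R`: returns the new row and
the letter (if any) bumped into the next row.  Case 1: if `R` is empty or
`x > max R`, append `x`.  Case 3: if `x ∈ R`, leave `R` unchanged and bump the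
smallest `y` with `[y,x] ⊆ R`.  Case 2: otherwise replace the smallest `y > x`
by `x` and bump `y`. -/
noncomputable def insertRow (R : List ℕ) (x : ℕ) : List ℕ × Option ℕ :=
  if ∀ y ∈ R, y < x then (R ++ [x], none)
  else if x ∈ R then (R, some (intervalMin R x))
  else (R.map (fun y => if y = minGT R x then x else y), some (minGT R x))

/-- `⋆`-insertion of a letter into a tableau, whose rows are listed bottom row
first (French notation). -/
noncomputable def insertTab : List (List ℕ) → ℕ → List (List ℕ)
  | [], x => [[x]]
  | R :: rest, x =>
    match (insertRow R x).2 with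
    | none => (insertRow R x).1 :: rest
    | some y => (insertRow R x).1 :: insertTab rest y

/-- The row reading word: rows are read from the top row down (French notation),
each row from left to right. -/
def rowWord (T : List (List ℕ)) : List ℕ := T.reverse.flatten

/-- `T` (rows listed bottom row first) is a tableau with strictly increasing rows
whose transpose is semistandard: rows are nonempty with weakly decreasing lengths
going up, rows strictly increase, and columns weakly increase going up. -/
def TransposeSSYT (T : List (List ℕ)) : Prop :=
  (∀ R ∈ T, R ≠ []) ∧
  List.Chain' (fun a b => b ≤ a) (T.map List.length) ∧
  (∀ R ∈ T, List.Chain' (· < ·) R) ∧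
  (∀ r c, r + 1 < T.length → c < (T.getD (r+1) []).length →
    (T.getD r []).getD c 0 ≤ (T.getD (r+1) []).getD c 0)

/-- `T` (rows listed bottom row first) is a semistandard Young tableau: rows are
nonempty with weakly decreasing lengths going up, rows weakly increase, and
columns strictly increase going up. -/
def IsSSYT (T : List (List ℕ)) : Prop :=
  (∀ R ∈ T, R ≠ []) ∧
  List.Chain' (fun a b => b ≤ a) (T.map List.length) ∧
  (∀ R ∈ T, List.Chain' (· ≤ ·) R) ∧
  (∀ r c, r + 1 < T.length → c < (T.getD (r+1) []).length →
    (T.getD r []).getD c 0 < (T.getD (r+1) []).getD c 0)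

/-- The insertion path of the `⋆`-insertion of `x` into the tableau, as a list of
cells `(row, column)` (both 0-indexed, rows from the bottom, starting at row `r`):
in Case 1 the newly appended cell, in Case 2 the cell of the bumped letter, in
Case 3 the cell containing the letter equal to the inserted one. -/
noncomputable def insertPath : List (List ℕ) → ℕ → ℕ → List (ℕ × ℕ)
  | [], _, r => [(r, 0)]
  | R :: rest, x, r =>
    if ∀ y ∈ R, y < x then [(r, R.length)]
    else if x ∈ R then (r, R.idxOf x) :: insertPath rest (intervalMin R x) (r+1)
    else (r, R.idxOf (minGT R x)) :: insertPath rest (minGT R x) (r+1)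

/-- The new box created by the `⋆`-insertion of `x` into `T`. -/
noncomputable def newBox (T : List (List ℕ)) (x : ℕ) : ℕ × ℕ :=
  (insertPath T x 0).getLastD (0, 0)

/-!
Induct on the rows of `P`, bottom to top. A letter `y` inserted into a strictly increasing row
`R` lands in column `entryCol R y`, the number of entries smaller than `y`; since `x` sits in
the row after its insertion, `x' > x` lands strictly to its right. If `x'` stops in that row,
the rest of the path of `x` stays to the left, because columns of a tableau weakly increase
going up and so insertion paths move weakly left. Otherwise `x` and `x'` bump letters `b < b'`
into the next row and induction applies. Full commutativity of `row(P)·x·x'` passes to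
`row(rest)·b·b'` since one row insertion `R·y ≡ b·R'` is a 0-Hecke equivalence; it also rules
out `x, x + 1 ∈ R`, which is what forces `b < b'` when `x` is already in the row.
-/

open List

section Row

variable {R : List ℕ} {x : ℕ}

theorem eq_filter_lt_append_cons (hR : R.Pairwise (· < ·)) {t : ℕ} (ht : t ∈ R) :
    R = R.filter (· < t) ++ t :: R.filter (t < ·) := by
  refine hR.eq_of_mem_iff ?_ fun z => ?_
  · simp only [pairwise_append, pairwise_cons, mem_filter, mem_cons, decide_eq_true_eq]
    refine ⟨hR.filter _, ⟨fun z hz => hz.2, hR.filter _⟩, ?_⟩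
    rintro a ⟨-, ha⟩ b (rfl | ⟨-, hb⟩) <;> omega
  · simp only [mem_append, mem_filter, mem_cons, decide_eq_true_eq]
    constructor
    · intro hz
      rcases lt_trichotomy z t with h | rfl | h <;> simp [*]
    · rintro (⟨hz, -⟩ | rfl | ⟨hz, -⟩) <;> assumption

theorem eq_filter_lt_append_cons_cons (hR : R.Pairwise (· < ·)) (hx : x ∈ R)
    (hx1 : x + 1 ∈ R) :
    R = R.filter (· < x) ++ x :: (x + 1) :: R.filter (x + 1 < ·) := by
  refine hR.eq_of_mem_iff ?_ fun z => ?_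
  · simp only [pairwise_append, pairwise_cons, mem_filter, mem_cons, decide_eq_true_eq]
    refine ⟨hR.filter _, ⟨?_, fun z hz => hz.2, hR.filter _⟩, ?_⟩
    · rintro a (rfl | ⟨-, ha⟩) <;> omega
    · rintro a ⟨-, ha⟩ b (rfl | rfl | ⟨-, hb⟩) <;> omega
  · simp only [mem_append, mem_filter, mem_cons, decide_eq_true_eq]
    constructor
    · intro hz
      by_cases h1 : z < x
      · exact Or.inl ⟨hz, h1⟩
      by_cases h2 : z = x
      · exact Or.inr (Or.inl h2)
      by_cases h3 : z = x + 1
      · exact Or.inr (Or.inr (Or.inl h3))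
      exact Or.inr (Or.inr (Or.inr ⟨hz, by omega⟩))
    · rintro (⟨hz, -⟩ | rfl | rfl | ⟨hz, -⟩) <;> assumption

theorem idxOf_eq_countP_lt (hR : R.Pairwise (· < ·)) {t : ℕ} (ht : t ∈ R) :
    R.idxOf t = R.countP (· < t) := by
  conv_lhs => rw [eq_filter_lt_append_cons hR ht]
  rw [idxOf_append_of_notMem (by simp), idxOf_cons_self, countP_eq_length_filter, add_zero]

theorem isLeast_minGT (h : ∃ y ∈ R, x < y) : IsLeast {y | y ∈ R ∧ x < y} (minGT R x) := by
  obtain ⟨z, hz, hxz⟩ := h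
  cases hmin : (R.filter (x < ·)).min? with
  | none =>
    simp only [min?_eq_none_iff, filter_eq_nil_iff, decide_eq_true_eq] at hmin
    exact absurd hxz (hmin z hz)
  | some m =>
    obtain ⟨hm, hle⟩ := min?_eq_some_iff.mp hmin
    rw [minGT, hmin, Option.getD_some]
    exact ⟨by simpa using hm, fun y hy => hle y (by simpa using hy)⟩

theorem filter_lt_minGT (hx : x ∉ R) (h : ∃ y ∈ R, x < y) :
    R.filter (· < minGT R x) = R.filter (· < x) := by
  refine filter_congr fun z hz => ?_
  have hle : z ∈ R ∧ x < z → minGT R x ≤ z := fun hz' => (isLeast_minGT h).2 hz'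
  have hxm := (isLeast_minGT h).1.2
  have hzx : z ≠ x := fun h => hx (h ▸ hz)
  simp only [decide_eq_decide]
  constructor
  · intro hzm
    by_contra hxz
    exact absurd (hle ⟨hz, by omega⟩) (by omega)
  · omega

theorem isLeast_intervalMin (hx : x ∈ R) :
    IsLeast {y | y ≤ x ∧ ∀ z, y ≤ z → z ≤ x → z ∈ R} (intervalMin R x) :=
  ⟨Nat.sInf_mem ⟨x, le_rfl, fun _ h1 h2 => le_antisymm h2 h1 ▸ hx⟩,
    fun _ hy => Nat.sInf_le hy⟩

theorem succ_lt_intervalMin (hx : x ∈ R) {z : ℕ} (hz : z ∈ R) (hzb : z < intervalMin R x) :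
    z + 1 < intervalMin R x := by
  obtain ⟨⟨hbx, hint⟩, hmin⟩ := isLeast_intervalMin hx
  by_contra hcon
  have : intervalMin R x ≤ z := hmin ⟨by omega, fun w h1 h2 =>
    if hw : w = z then hw ▸ hz else hint w (by omega) h2⟩
  omega

theorem insertRow_cases (hR : R.Pairwise (· < ·)) (x : ℕ) :
    (∀ y ∈ R, y < x) ∧ insertRow R x = (R ++ [x], none) ∨
    x ∈ R ∧ insertRow R x = (R, some (intervalMin R x)) ∨
    x ∉ R ∧ (∃ y ∈ R, x < y) ∧
      insertRow R x = (R.filter (· < x) ++ x :: R.filter (minGT R x < ·), some (minGT R x)) := by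
  by_cases h1 : ∀ y ∈ R, y < x
  · exact Or.inl ⟨h1, if_pos h1⟩
  by_cases h2 : x ∈ R
  · exact Or.inr (Or.inl ⟨h2, by rw [insertRow, if_neg h1, if_pos h2]⟩)
  have hex : ∃ y ∈ R, x < y := by
    simp only [not_forall, not_lt] at h1
    obtain ⟨y, hy, hxy⟩ := h1
    exact ⟨y, hy, lt_of_le_of_ne hxy fun h => h2 (h ▸ hy)⟩
  refine Or.inr (Or.inr ⟨h2, hex, ?_⟩)
  rw [insertRow, if_neg h1, if_neg h2, ← filter_lt_minGT h2 hex]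
  obtain ⟨hm, hxm⟩ := (isLeast_minGT hex).1
  set m := minGT R x
  have hsplit := eq_filter_lt_append_cons hR hm
  congr 1
  conv_lhs => rw [hsplit]
  rw [map_append, map_cons, if_pos rfl]
  have hne : ∀ z ∈ R.filter (· < m) ++ R.filter (m < ·), (if z = m then x else z) = z := by
    intro z hz
    simp only [mem_append, mem_filter, decide_eq_true_eq] at hz
    exact if_neg (by omega)
  rw [map_congr_left fun z hz => hne z (mem_append_left _ hz), map_id',
    map_congr_left fun z hz => hne z (mem_append_right _ hz), map_id']

def entryCol (R : List ℕ) (x : ℕ) : ℕ := R.countP (· < x)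

theorem exists_insertRow_fst_eq (hR : R.Pairwise (· < ·)) (x : ℕ) :
    ∃ S : List ℕ, S.Pairwise (· < ·) ∧ (∀ z ∈ S, x < z) ∧
      (insertRow R x).1 = R.filter (· < x) ++ x :: S := by
  rcases insertRow_cases hR x with ⟨h1, h⟩ | ⟨hx, h⟩ | ⟨hx, hex, h⟩ <;> rw [h]
  · exact ⟨[], .nil, by simp, by rw [filter_eq_self.mpr (by simpa using h1)]⟩
  · exact ⟨R.filter (x < ·), hR.filter _, by simp, eq_filter_lt_append_cons hR hx⟩
  · have hxm := (isLeast_minGT hex).1.2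
    refine ⟨R.filter (minGT R x < ·), hR.filter _, fun z hz => ?_, rfl⟩
    simp only [mem_filter, decide_eq_true_eq] at hz
    omega

theorem pairwise_insertRow_fst (hR : R.Pairwise (· < ·)) (x : ℕ) :
    (insertRow R x).1.Pairwise (· < ·) := by
  obtain ⟨S, hS, hxS, h⟩ := exists_insertRow_fst_eq hR x
  rw [h, pairwise_append, pairwise_cons]
  refine ⟨hR.filter _, ⟨hxS, hS⟩, fun a ha b hb => ?_⟩
  simp only [mem_filter, decide_eq_true_eq] at ha
  rcases mem_cons.mp hb with rfl | hb
  · exact ha.2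
  · exact ha.2.trans (hxS b hb)

theorem entryCol_lt_entryCol_insertRow (hR : R.Pairwise (· < ·)) {x' : ℕ} (hxx : x < x') :
    entryCol R x < entryCol (insertRow R x).1 x' := by
  obtain ⟨S, -, -, h⟩ := exists_insertRow_fst_eq hR x
  have hlt : (R.filter (· < x)).countP (· < x') = (R.filter (· < x)).length :=
    countP_eq_length.mpr fun z hz => by simp only [mem_filter, decide_eq_true_eq] at hz ⊢; omega
  rw [entryCol, entryCol, h, countP_append, countP_cons_of_pos (by simpa using hxx), hlt,
    countP_eq_length_filter]
  omega

theorem insertRow_snd_eq_none_iff : (insertRow R x).2 = none ↔ ∀ y ∈ R, y < x := by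
  unfold insertRow
  split_ifs with h1
  · exact iff_of_true rfl h1
  all_goals exact iff_of_false (by simp) h1

theorem insertRow_insertRow_snd_eq_none (h : (insertRow R x).2 = none) {x' : ℕ} (hxx : x < x') :
    (insertRow (insertRow R x).1 x').2 = none := by
  have h1 := insertRow_snd_eq_none_iff.mp h
  rw [insertRow_snd_eq_none_iff, show (insertRow R x).1 = R ++ [x] by rw [insertRow, if_pos h1]]
  intro y hy
  rcases mem_append.mp hy with hy | hy
  · exact (h1 y hy).trans hxx
  · simpa [mem_singleton.mp hy] using hxx

theorem entryCol_bumped_le (hR : R.Pairwise (· < ·)) {b : ℕ} (hb : (insertRow R x).2 = some b) :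
    entryCol R b ≤ entryCol R x := by
  rcases insertRow_cases hR x with ⟨-, h⟩ | ⟨hx, h⟩ | ⟨hx, hex, h⟩ <;>
    simp only [h, reduceCtorEq, Option.some.injEq] at hb <;> subst hb
  · exact countP_mono_left fun z _ hz => by
      simpa using lt_of_lt_of_le (by simpa using hz) (isLeast_intervalMin hx).1.1
  · rw [entryCol, entryCol, countP_eq_length_filter, countP_eq_length_filter,
      filter_lt_minGT hx hex]

theorem bumped_lt_bumped (hR : R.Pairwise (· < ·)) (hsucc : x ∈ R → x + 1 ∉ R)
    {x' b b' : ℕ} (hxx : x < x') (hb : (insertRow R x).2 = some b)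
    (hb' : (insertRow (insertRow R x).1 x').2 = some b') : b < b' := by
  have hR1 := pairwise_insertRow_fst hR x
  rcases insertRow_cases hR x with ⟨-, h⟩ | ⟨hx, h⟩ | ⟨hx, hex, h⟩ <;>
    simp only [h, reduceCtorEq, Option.some.injEq] at hb hR1 hb' <;> subst hb
  · -- `x + 1 ∉ R` separates `b ≤ x` from the interval `[b', x']`
    have hbx := (isLeast_intervalMin hx).1.1
    rcases insertRow_cases hR x' with ⟨-, h'⟩ | ⟨hx', h'⟩ | ⟨hx', hex', h'⟩ <;>
      simp only [h', reduceCtorEq, Option.some.injEq] at hb' <;> subst hb'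
    · obtain ⟨-, hint⟩ := (isLeast_intervalMin hx').1
      by_contra hcon
      exact hsucc hx (hint (x + 1) (by omega) (by omega))
    · have := (isLeast_minGT hex').1.2
      omega
  · -- the bumped letter `minGT R x` has left the row
    set m := minGT R x
    have hxm : x < m := (isLeast_minGT hex).1.2
    have hm : m ∉ R.filter (· < x) ++ x :: R.filter (m < ·) := by
      simp only [mem_append, mem_filter, mem_cons, decide_eq_true_eq, not_or, not_and]
      exact ⟨fun _ => by omega, by omega, fun _ => lt_irrefl m⟩
    have habove : ∀ z ∈ R.filter (· < x) ++ x :: R.filter (m < ·), x < z → m < z := by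
      intro z hz hxz
      simp only [mem_append, mem_filter, mem_cons, decide_eq_true_eq] at hz
      omega
    rcases insertRow_cases hR1 x' with ⟨-, h'⟩ | ⟨hx', h'⟩ | ⟨hx', hex', h'⟩ <;>
      simp only [h', reduceCtorEq, Option.some.injEq] at hb' <;> subst hb'
    · obtain ⟨-, hint⟩ := (isLeast_intervalMin hx').1
      by_contra hcon
      exact hm (hint m (by omega) (habove x' hx' hxx).le)
    · obtain ⟨hmem, hlt⟩ := (isLeast_minGT hex').1
      exact habove _ hmem (hxx.trans hlt)

theorem insertPath_cons_of_insertRow_none (h : (insertRow R x).2 = none)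
    (rest : List (List ℕ)) (r : ℕ) : insertPath (R :: rest) x r = [(r, entryCol R x)] := by
  have h1 := insertRow_snd_eq_none_iff.mp h
  rw [insertPath, if_pos h1, entryCol, countP_eq_length.mpr (by simpa using h1)]

theorem insertPath_cons_of_insertRow_some (hR : R.Pairwise (· < ·)) {b : ℕ}
    (hb : (insertRow R x).2 = some b) (rest : List (List ℕ)) (r : ℕ) :
    insertPath (R :: rest) x r = (r, entryCol R x) :: insertPath rest b (r + 1) := by
  rcases insertRow_cases hR x with ⟨-, h⟩ | ⟨hx, h⟩ | ⟨hx, hex, h⟩ <;>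
    simp only [h, reduceCtorEq, Option.some.injEq] at hb <;> subst hb
  · rw [insertPath, if_neg fun h1 => lt_irrefl x (h1 x hx), if_pos hx, idxOf_eq_countP_lt hR hx,
      entryCol]
  · have h1 : ¬ ∀ y ∈ R, y < x := fun h1 => by
      obtain ⟨y, hy, hxy⟩ := hex
      exact lt_asymm hxy (h1 y hy)
    rw [insertPath, if_neg h1, if_neg hx, idxOf_eq_countP_lt hR (isLeast_minGT hex).1.1, entryCol,
      countP_eq_length_filter, countP_eq_length_filter, filter_lt_minGT hx hex]

end Row

section Hecke

theorem HeckeEquiv.refl (w : List ℕ) : HeckeEquiv w w := Relation.EqvGen.refl w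

theorem HeckeEquiv.symm {w w' : List ℕ} (h : HeckeEquiv w w') : HeckeEquiv w' w :=
  Relation.EqvGen.symm _ _ h

theorem HeckeEquiv.trans {w₁ w₂ w₃ : List ℕ} (h₁ : HeckeEquiv w₁ w₂)
    (h₂ : HeckeEquiv w₂ w₃) : HeckeEquiv w₁ w₃ :=
  Relation.EqvGen.trans _ _ _ h₁ h₂

theorem HeckeStep.heckeEquiv {w w' : List ℕ} (h : HeckeStep w w') : HeckeEquiv w w' :=
  Relation.EqvGen.rel _ _ h

theorem HeckeStep.append_context {w w' : List ℕ} (h : HeckeStep w w') (u v : List ℕ) :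
    HeckeStep (u ++ w ++ v) (u ++ w' ++ v) := by
  cases h with
  | comm u' v' p q hpq => simpa using HeckeStep.comm (u ++ u') (v' ++ v) p q hpq
  | braid u' v' p q => simpa using HeckeStep.braid (u ++ u') (v' ++ v) p q
  | idem u' v' p => simpa using HeckeStep.idem (u ++ u') (v' ++ v) p

theorem HeckeEquiv.append_context {w w' : List ℕ} (h : HeckeEquiv w w') (u v : List ℕ) :
    HeckeEquiv (u ++ w ++ v) (u ++ w' ++ v) := by
  induction h with
  | rel _ _ h => exact (h.append_context u v).heckeEquiv
  | refl => exact .refl _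
  | symm _ _ _ ih => exact ih.symm
  | trans _ _ _ _ _ ih₁ ih₂ => exact ih₁.trans ih₂

theorem heckeEquiv_commute_past (U B V : List ℕ) (x : ℕ)
    (h : ∀ z ∈ B, x + 1 < z ∨ z + 1 < x) :
    HeckeEquiv (U ++ B ++ x :: V) (U ++ x :: (B ++ V)) := by
  induction B generalizing U with
  | nil => simpa using HeckeEquiv.refl (U ++ x :: V)
  | cons b B ih =>
    have hB := ih (U ++ [b]) fun z hz => h z (mem_cons_of_mem _ hz)
    have hb := HeckeStep.comm U (B ++ V) b x (h b mem_cons_self).symm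
    simp only [append_assoc, cons_append, nil_append] at hB hb ⊢
    exact hB.trans hb.heckeEquiv

theorem FullyCommutative.of_heckeEquiv {w w' : List ℕ} (h : FullyCommutative w)
    (he : HeckeEquiv w w') : FullyCommutative w' :=
  fun w'' he' => h w'' (he.trans he')

theorem FullyCommutative.of_append {u v : List ℕ} (h : FullyCommutative (u ++ v)) :
    FullyCommutative u := by
  rintro u' he ⟨U, W, i, hu'⟩
  refine h (u' ++ v) (by simpa using he.append_context [] v) ⟨U, W ++ v, i, ?_⟩
  rcases hu' with rfl | rfl <;> simp

theorem not_fullyCommutative_of_braid (U B V : List ℕ) (a : ℕ) (hB : ∀ z ∈ B, a + 1 < z) :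
    ¬ FullyCommutative (U ++ a :: (a + 1) :: (B ++ a :: V)) := by
  intro h
  have he := heckeEquiv_commute_past (U ++ [a, a + 1]) B V a fun z hz => .inl (hB z hz)
  refine h _ (by simpa using he) ⟨U, B ++ V, a, .inl ?_⟩
  simp

theorem FullyCommutative.succ_notMem {W R V : List ℕ} {x : ℕ} (hR : R.Pairwise (· < ·))
    (hfc : FullyCommutative (W ++ R ++ x :: V)) (hx : x ∈ R) : x + 1 ∉ R := by
  intro hx1
  refine not_fullyCommutative_of_braid (W ++ R.filter (· < x)) (R.filter (x + 1 < ·)) V x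
    (fun z hz => by simpa using (mem_filter.mp hz).2) ?_
  rw [eq_filter_lt_append_cons_cons hR hx hx1] at hfc
  simpa using hfc

theorem heckeEquiv_append_singleton_of_mem {R : List ℕ} {x : ℕ} (hR : R.Pairwise (· < ·))
    (hx : x ∈ R) (hx1 : x + 1 ∉ R) : HeckeEquiv (R ++ [x]) R := by
  set A := R.filter (· < x)
  set B := R.filter (x < ·)
  have hsplit : R = A ++ x :: B := eq_filter_lt_append_cons hR hx
  have hB : ∀ z ∈ B, x + 1 < z ∨ z + 1 < x := fun z hz => by
    have : z ∈ R ∧ x < z := by simpa [B] using hz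
    exact .inl (lt_of_le_of_ne this.2 fun h => hx1 (h ▸ this.1))
  have hmove := heckeEquiv_commute_past (A ++ [x]) B [] x hB
  have hidem := HeckeStep.idem A B x
  rw [hsplit]
  simp only [append_assoc, cons_append, nil_append, append_nil] at hmove hidem ⊢
  exact hmove.trans hidem.heckeEquiv

theorem heckeEquiv_intervalMin_cons {R : List ℕ} {x : ℕ} (hR : R.Pairwise (· < ·))
    (hx : x ∈ R) : HeckeEquiv (intervalMin R x :: R) R := by
  set b := intervalMin R x
  set A := R.filter (· < b)
  set B := R.filter (b < ·)
  have hb : b ∈ R := (isLeast_intervalMin hx).1.2 b le_rfl (isLeast_intervalMin hx).1.1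
  have hsplit : R = A ++ b :: B := eq_filter_lt_append_cons hR hb
  have hA : ∀ z ∈ A, b + 1 < z ∨ z + 1 < b := fun z hz => by
    have : z ∈ R ∧ z < b := by simpa [A] using hz
    exact .inr (succ_lt_intervalMin hx this.1 this.2)
  have hmove := heckeEquiv_commute_past [] A (b :: B) b hA
  have hidem := HeckeStep.idem A B b
  rw [hsplit]
  simp only [nil_append] at hmove
  exact hmove.symm.trans hidem.heckeEquiv

theorem heckeEquiv_insertRow {R : List ℕ} {x b : ℕ} (hR : R.Pairwise (· < ·))
    (hsucc : x ∈ R → x + 1 ∉ R) (hb : (insertRow R x).2 = some b) :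
    HeckeEquiv (R ++ [x]) (b :: (insertRow R x).1) := by
  rcases insertRow_cases hR x with ⟨-, h⟩ | ⟨hx, h⟩ | ⟨hx, hex, h⟩ <;>
    simp only [h, reduceCtorEq, Option.some.injEq] at hb ⊢ <;> subst hb
  · exact (heckeEquiv_append_singleton_of_mem hR hx (hsucc hx)).trans
      (heckeEquiv_intervalMin_cons hR hx).symm
  · set m := minGT R x
    obtain ⟨hm, hxm⟩ := (isLeast_minGT hex).1
    have hsplit : R = R.filter (· < x) ++ m :: R.filter (m < ·) := by
      rw [← filter_lt_minGT hx hex]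
      exact eq_filter_lt_append_cons hR hm
    set A := R.filter (· < x)
    set B := R.filter (m < ·)
    have hB : ∀ z ∈ B, x + 1 < z ∨ z + 1 < x := fun z hz => by
      have : z ∈ R ∧ m < z := by simpa [B] using hz
      omega
    have hA : ∀ z ∈ A, m + 1 < z ∨ z + 1 < m := fun z hz => by
      have : z ∈ R ∧ z < x := by simpa [A] using hz
      omega
    have hmoveX := heckeEquiv_commute_past (A ++ [m]) B [] x hB
    have hmoveM := heckeEquiv_commute_past [] A (x :: B) m hA
    rw [hsplit]
    simp only [append_assoc, cons_append, nil_append, append_nil] at hmoveX hmoveM ⊢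
    exact hmoveX.trans hmoveM

theorem FullyCommutative.bump {W R V : List ℕ} {x b : ℕ} (hR : R.Pairwise (· < ·))
    (hb : (insertRow R x).2 = some b) (hfc : FullyCommutative (W ++ R ++ x :: V)) :
    FullyCommutative (W ++ b :: (insertRow R x).1 ++ V) := by
  have he := (heckeEquiv_insertRow hR (hfc.succ_notMem hR) hb).append_context W V
  simp only [append_assoc, cons_append, nil_append] at he hfc ⊢
  exact hfc.of_heckeEquiv he

theorem FullyCommutative.bump_pair {W R : List ℕ} {x x' b b' : ℕ} (hR : R.Pairwise (· < ·))
    (hfc : FullyCommutative (W ++ R ++ [x, x'])) (hb : (insertRow R x).2 = some b)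
    (hb' : (insertRow (insertRow R x).1 x').2 = some b') : FullyCommutative (W ++ [b, b']) := by
  have h1 : FullyCommutative ((W ++ [b]) ++ (insertRow R x).1 ++ x' :: []) := by
    simpa using hfc.bump hR hb
  have h2 : FullyCommutative (W ++ [b, b'] ++ (insertRow (insertRow R x).1 x').1) := by
    simpa using h1.bump (pairwise_insertRow_fst hR x) hb'
  exact h2.of_append

end Hecke

section Tableau

theorem countP_lt_le_of_getElem_le {R R0 : List ℕ} (hR0 : R0.Pairwise (· < ·))
    (hlen : R0.length ≤ R.length) (hle : ∀ i (hi : i < R0.length), R[i] ≤ R0[i]) (t : ℕ) :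
    R0.countP (· < t) ≤ R.countP (· < t) := by
  induction R0 generalizing R with
  | nil => simp
  | cons a R0 ih =>
    obtain _ | ⟨c, R⟩ := R
    · simp at hlen
    have hca : c ≤ a := hle 0 (by simp)
    by_cases hat : a < t
    · have hrest := ih (pairwise_cons.mp hR0).2 (by simpa using hlen)
        fun i hi => hle (i + 1) (by simpa)
      rw [countP_cons_of_pos (by simpa using hat),
        countP_cons_of_pos (by simpa using hca.trans_lt hat)]
      omega
    · rw [countP_eq_zero.mpr]
      · exact Nat.zero_le _
      intro z hz
      rcases mem_cons.mp hz with rfl | hz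
      · simpa using hat
      · have := (pairwise_cons.mp hR0).1 z hz
        simp only [decide_eq_true_eq]
        omega

variable {R : List ℕ} {rest : List (List ℕ)}

theorem TransposeSSYT.tail (h : TransposeSSYT (R :: rest)) : TransposeSSYT rest := by
  obtain ⟨h1, h2, h3, h4⟩ := h
  rw [map_cons] at h2
  refine ⟨fun S hS => h1 S (mem_cons_of_mem _ hS), h2.tail,
    fun S hS => h3 S (mem_cons_of_mem _ hS), fun r c hr hc => ?_⟩
  simpa using h4 (r + 1) c (by simpa using hr) (by simpa using hc)

theorem TransposeSSYT.pairwise_head (h : TransposeSSYT (R :: rest)) : R.Pairwise (· < ·) :=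
  isChain_iff_pairwise.mp (h.2.2.1 R mem_cons_self)

theorem TransposeSSYT.entryCol_le {R0 : List ℕ} (h : TransposeSSYT (R :: R0 :: rest)) (t : ℕ) :
    entryCol R0 t ≤ entryCol R t := by
  have hlen : R0.length ≤ R.length := (isChain_cons_cons.mp h.2.1).1
  refine countP_lt_le_of_getElem_le h.tail.pairwise_head hlen (fun i hi => ?_) t
  simpa [getD_eq_getElem, hi, hi.trans_le hlen] using h.2.2.2 0 i (by simp) (by simpa using hi)

end Tableau

section Path

theorem insertPath_ne_nil (T : List (List ℕ)) (y r : ℕ) : insertPath T y r ≠ [] := by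
  cases T with
  | nil => simp [insertPath]
  | cons R rest =>
    rw [insertPath]
    split_ifs <;> simp

theorem le_fst_of_mem_insertPath {T : List (List ℕ)} {y r : ℕ} {p : ℕ × ℕ}
    (hp : p ∈ insertPath T y r) : r ≤ p.1 := by
  induction T generalizing y r with
  | nil => simp_all [insertPath]
  | cons R rest ih =>
    rw [insertPath] at hp
    split_ifs at hp
    · simp_all
    all_goals
      rcases mem_cons.mp hp with rfl | hp
      · exact le_rfl
      · exact (ih hp).trans' r.le_succ

theorem snd_le_entryCol_of_mem_insertPath {T : List (List ℕ)} (hT : TransposeSSYT T) {y r : ℕ}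
    {p : ℕ × ℕ} (hp : p ∈ insertPath T y r) : p.2 ≤ entryCol (T.headD []) y := by
  induction T generalizing y r with
  | nil => simp_all [insertPath]
  | cons R rest ih =>
    have hR := hT.pairwise_head
    cases hb : (insertRow R y).2 with
    | none => simp_all [insertPath_cons_of_insertRow_none hb]
    | some b =>
      rw [insertPath_cons_of_insertRow_some hR hb] at hp
      rcases mem_cons.mp hp with rfl | hp
      · exact le_rfl
      calc p.2 ≤ entryCol (rest.headD []) b := ih hT.tail hp
        _ ≤ entryCol R b := by
          cases rest with
          | nil => exact Nat.zero_le _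
          | cons R0 rest => exact hT.entryCol_le b
        _ ≤ entryCol R y := entryCol_bumped_le hR hb

theorem getLastD_cons_of_ne_nil {α : Type*} {l : List α} (h : l ≠ []) (a d : α) :
    (a :: l).getLastD d = l.getLastD d := by
  obtain ⟨b, l, rfl⟩ := exists_cons_of_ne_nil h
  rfl

theorem getLastD_mem_of_ne_nil {α : Type*} {l : List α} (h : l ≠ []) (d : α) :
    l.getLastD d ∈ l := by
  obtain ⟨b, l, rfl⟩ := exists_cons_of_ne_nil h
  rw [getLastD_cons]
  exact getLastD_mem_cons

def StrictlyRightOf (q p : List (ℕ × ℕ)) : Prop :=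
  ∀ r c c', (r, c) ∈ p → (r, c') ∈ q → c < c'

theorem StrictlyRightOf.cons {p q : List (ℕ × ℕ)} {r c c' : ℕ} (hp : ∀ a ∈ p, r < a.1)
    (hq : ∀ a ∈ q, r < a.1) (hc : c < c') (h : StrictlyRightOf q p) :
    StrictlyRightOf ((r, c') :: q) ((r, c) :: p) := by
  intro s d d' hd hd'
  rcases mem_cons.mp hd with hd | hd <;> rcases mem_cons.mp hd' with hd' | hd'
  · simp_all
  · simp only [Prod.mk.injEq] at hd
    exact absurd (hq _ hd') (by simp [hd.1])
  · simp only [Prod.mk.injEq] at hd'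
    exact absurd (hp _ hd) (by simp [hd'.1])
  · exact h s d d' hd hd'

end Path

theorem insertPath_insertTab_strictlyRightOf (P : List (List ℕ)) (hP : TransposeSSYT P)
    (x x' r : ℕ) (hfc : FullyCommutative (rowWord P ++ [x, x'])) (hxx : x < x') :
    StrictlyRightOf (insertPath (insertTab P x) x' r) (insertPath P x r) ∧
    ((insertPath P x r).getLastD (0, 0)).2 <
      ((insertPath (insertTab P x) x' r).getLastD (0, 0)).2 ∧
    ((insertPath (insertTab P x) x' r).getLastD (0, 0)).1 ≤
      ((insertPath P x r).getLastD (0, 0)).1 := by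
  induction P generalizing x x' r with
  | nil =>
    have : insertPath (insertTab [] x) x' r = [(r, 1)] := by simp [insertTab, insertPath, hxx]
    rw [this, insertPath]
    exact ⟨.cons (by simp) (by simp) one_pos (by simp [StrictlyRightOf]), one_pos, le_rfl⟩
  | cons R rest ih =>
    have hR := hP.pairwise_head
    have hfcR : FullyCommutative (rowWord rest ++ R ++ x :: [x']) := by simpa [rowWord] using hfc
    have hcol := entryCol_lt_entryCol_insertRow hR hxx
    have hend := getLastD_mem_of_ne_nil (insertPath_ne_nil (R :: rest) x r) (0, 0)
    have hendCol := snd_le_entryCol_of_mem_insertPath hP hend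
    have hendRow := le_fst_of_mem_insertPath hend
    cases hb : (insertRow R x).2 with
    | none =>
      have hb' := insertRow_insertRow_snd_eq_none hb hxx
      rw [insertTab, hb]
      simp only
      rw [insertPath_cons_of_insertRow_none hb, insertPath_cons_of_insertRow_none hb']
      exact ⟨.cons (by simp) (by simp) hcol (by simp [StrictlyRightOf]), hcol, le_rfl⟩
    | some b =>
      rw [insertTab, hb]
      simp only
      rw [insertPath_cons_of_insertRow_some hR hb] at hendCol hendRow ⊢
      have hR1 := pairwise_insertRow_fst hR x
      have hrows := fun a (ha : a ∈ insertPath rest b (r + 1)) => le_fst_of_mem_insertPath ha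
      cases hb' : (insertRow (insertRow R x).1 x').2 with
      | none =>
        rw [insertPath_cons_of_insertRow_none hb']
        exact ⟨.cons hrows (by simp) hcol (by simp [StrictlyRightOf]), hendCol.trans_lt hcol,
          hendRow⟩
      | some b' =>
        rw [insertPath_cons_of_insertRow_some hR1 hb']
        obtain ⟨ih1, ih2, ih3⟩ := ih hP.tail b b' (r + 1) (hfcR.bump_pair hR hb hb')
          (bumped_lt_bumped hR (hfcR.succ_notMem hR) hxx hb hb')
        rw [getLastD_cons_of_ne_nil (insertPath_ne_nil _ _ _),
          getLastD_cons_of_ne_nil (insertPath_ne_nil _ _ _)]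
        exact ⟨.cons hrows (fun a ha => le_fst_of_mem_insertPath ha) hcol ih1, ih2, ih3⟩

theorem star_row_bumping_lt_general (P : List (List ℕ)) (x x' : ℕ)
    (hP : TransposeSSYT P)
    (hfc2 : FullyCommutative (rowWord P ++ [x, x']))
    (hxx : x < x') :
    (∀ r c c', (r, c) ∈ insertPath P x 0 →
      (r, c') ∈ insertPath (insertTab P x) x' 0 → c < c') ∧
    (newBox P x).2 < (newBox (insertTab P x) x').2 ∧
    (newBox (insertTab P x) x').1 ≤ (newBox P x).1 :=
  insertPath_insertTab_strictlyRightOf P hP x x' 0 hfc2 hxx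

/-- Row bumping lemma for `⋆`-insertion, increasing case: if `x < x'` and
`row(P)·x·x'` is fully-commutative, then the insertion path of
`(P ← x) ← x'` is strictly to the right of that of `P ← x`, and the new box
added by `x'` is strictly to the right of and weakly below the new box added
by `x` (rows are indexed bottom-to-top, so "weakly below" is `≤` on row
indices). -/
theorem star_row_bumping_lt (P : List (List ℕ)) (x x' : ℕ)
    (hP : TransposeSSYT P)
    (hfc : FullyCommutative (rowWord P))
    (hfc2 : FullyCommutative (rowWord P ++ [x, x']))
    (hxx : x < x') :
    (∀ r c c', (r, c) ∈ insertPath P x 0 →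
      (r, c') ∈ insertPath (insertTab P x) x' 0 → c < c') ∧
    (newBox P x).2 < (newBox (insertTab P x) x').2 ∧
    (newBox (insertTab P x) x').1 ≤ (newBox P x).1 :=
  star_row_bumping_lt_general P x x' hP hfc2 hxx
end
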